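/- Let P = conv{(0,0), (7,0), (7,3), (1,3), (0,2)} ⊂ ℝ² (a convex pentagon) and let L = ([0,1] × [0,3]) ∪ ([1,2] × [0,1]) ⊂ ℝ² (an L-tetromino of area 4). Then (i) the area (2-dimensional Lebesgue measure) of P equals 41/2; and (ii) there exist isometries f₁, …, f₅ of ℝ² such that the sets f₁(L), …, f₅(L) are contained in P and have pairwise disjoint interiors. Consequently the five mutually congruent pieces cover area 20 of P, leaving uncovered area exactly 1/2. -/

import Mathlib

/-!
The five images of the tetromino are unions of two axis-parallel rectangles with integer
corners. Together they tile the rectangle `[0,7] × [0,3]` except for the unit square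
`[0,1] × [2,3]`, so distinct pieces meet only along segments and their interiors are disjoint.
The pentagon is that rectangle with the half of this square above the diagonal `y = x + 2`
removed, so the uncovered part is the other half, a triangle of area `1/2`. Both areas are
computed by Cavalieri's principle, integrating the lengths of the vertical slices.
-/

open MeasureTheory Set

section SignedPermutation

variable {ι : Type*} [Fintype ι]

def signedPermIsometry (σ : Equiv.Perm ι) (ε : ι → ℤˣ) (c : ι → ℝ) :
    EuclideanSpace ℝ ι ≃ᵢ EuclideanSpace ℝ ι where
  toFun p := WithLp.toLp 2 fun i => ε i * p (σ i) + c i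
  invFun q := WithLp.toLp 2 fun j => ε (σ.symm j) * (q (σ.symm j) - c (σ.symm j))
  left_inv p := by ext j; simp [← mul_assoc, ← Int.cast_mul, ← Units.val_mul]
  right_inv q := by ext i; simp [← mul_assoc, ← Int.cast_mul, ← Units.val_mul]
  isometry_toFun := Isometry.of_dist_eq fun p q => by
    simp only [EuclideanSpace.dist_eq, Real.dist_eq, add_sub_add_right_eq_sub, ← mul_sub,
      abs_mul, abs_unit_intCast, one_mul]
    rw [Equiv.sum_comp σ fun i => |p i - q i| ^ 2]

theorem signedPermIsometry_symm_apply (σ : Equiv.Perm ι) (ε : ι → ℤˣ) (c : ι → ℝ)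
    (q : EuclideanSpace ℝ ι) :
    (signedPermIsometry σ ε c).symm q =
      WithLp.toLp 2 fun j => ε (σ.symm j) * (q (σ.symm j) - c (σ.symm j)) :=
  rfl

end SignedPermutation

theorem disjoint_interior_union_left {X : Type*} [TopologicalSpace X] {s₁ s₂ t : Set X}
    (hs₁ : IsClosed s₁) (ht : IsClosed t) (h₁ : Disjoint (interior s₁) (interior t))
    (h₂ : Disjoint (interior s₂) (interior t)) :
    Disjoint (interior (s₁ ∪ s₂)) (interior t) := by
  rw [disjoint_iff_inter_eq_empty, ← interior_inter] at h₁ h₂ ⊢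
  rwa [union_inter_distrib_right, interior_union_isClosed_of_interior_empty (hs₁.inter ht) h₂]

theorem MeasureTheory.Measure.prod_setOf_mem_slice {α β : Type*} [MeasurableSpace α]
    [MeasurableSpace β] (μ : Measure α) (ν : Measure β) [SFinite ν] {s : Set α}
    {I : α → Set β} (hs : MeasurableSet s) (hI : MeasurableSet {q : α × β | q.2 ∈ I q.1}) :
    μ.prod ν {q | q.1 ∈ s ∧ q.2 ∈ I q.1} = ∫⁻ x in s, ν (I x) ∂μ := by
  change μ.prod ν (Prod.fst ⁻¹' s ∩ {q | q.2 ∈ I q.1}) = _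
  rw [Measure.prod_apply ((measurable_fst hs).inter hI), ← lintegral_indicator hs]
  congr 1 with x
  by_cases hx : x ∈ s <;> simp [hx, preimage]

theorem lintegral_Ioc_ofReal_eq_intervalIntegral {f : ℝ → ℝ} {a b : ℝ} (hab : a ≤ b)
    (hf : IntervalIntegrable f volume a b) (hf₀ : ∀ x ∈ Ioc a b, 0 ≤ f x) :
    ∫⁻ x in Ioc a b, ENNReal.ofReal (f x) = ENNReal.ofReal (∫ x in a..b, f x) := by
  rw [intervalIntegral.integral_of_le hab, ofReal_integral_eq_lintegral_ofReal hf.1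
    ((ae_restrict_iff' measurableSet_Ioc).2 (.of_forall hf₀))]

local notation "ℝ²" => EuclideanSpace ℝ (Fin 2)

theorem measurePreserving_coords : MeasurePreserving (fun p : ℝ² => (p 0, p 1)) :=
  (volume_preserving_finTwoArrow ℝ).comp (PiLp.volume_preserving_ofLp (Fin 2))

theorem volume_setOf_mem_slice {s : Set ℝ} {I : ℝ → Set ℝ} (hs : MeasurableSet s)
    (hI : MeasurableSet {q : ℝ × ℝ | q.2 ∈ I q.1}) :
    volume {p : ℝ² | p 0 ∈ s ∧ p 1 ∈ I (p 0)} = ∫⁻ x in s, volume (I x) := by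
  rw [← Measure.prod_setOf_mem_slice volume volume hs hI, ← Measure.volume_eq_prod]
  exact measurePreserving_coords.measure_preimage ((measurable_fst hs).inter hI).nullMeasurableSet

def rect (x₀ x₁ y₀ y₁ : ℝ) : Set ℝ² := {p | p 0 ∈ Icc x₀ x₁ ∧ p 1 ∈ Icc y₀ y₁}

theorem isClosed_rect (x₀ x₁ y₀ y₁ : ℝ) : IsClosed (rect x₀ x₁ y₀ y₁) :=
  (isClosed_Icc.preimage (PiLp.continuous_apply 2 _ 0)).inter
    (isClosed_Icc.preimage (PiLp.continuous_apply 2 _ 1))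

theorem interior_rect (x₀ x₁ y₀ y₁ : ℝ) :
    interior (rect x₀ x₁ y₀ y₁) = {p | p 0 ∈ Ioo x₀ x₁ ∧ p 1 ∈ Ioo y₀ y₁} := by
  have interior_coord (i : Fin 2) (s : Set ℝ) :
      interior {p : ℝ² | p i ∈ s} = {p | p i ∈ interior s} :=
    ((PiLp.isOpenMap_apply 2 (fun _ => ℝ) i).preimage_interior_eq_interior_preimage
      (PiLp.continuous_apply 2 (fun _ => ℝ) i) s).symm
  simp only [rect, ofPred_and, interior_inter, interior_coord, interior_Icc]

theorem disjoint_interior_rect {a b c d a' b' c' d' : ℝ}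
    (h : b ≤ a' ∨ b' ≤ a ∨ d ≤ c' ∨ d' ≤ c) :
    Disjoint (interior (rect a b c d)) (interior (rect a' b' c' d')) := by
  simp only [interior_rect, Set.disjoint_left]
  rintro p ⟨⟨_, _⟩, _, _⟩ ⟨⟨_, _⟩, _, _⟩
  rcases h with h | h | h | h <;> linarith

def pentagon : Set ℝ² := {p | p 0 ∈ Icc 0 7 ∧ p 1 ∈ Icc 0 (min 3 (p 0 + 2))}

theorem convex_pentagon : Convex ℝ pentagon := by
  rintro p ⟨⟨hp0, hp7⟩, hp, hp'⟩ q ⟨⟨hq0, hq7⟩, hq, hq'⟩ a b ha hb hab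
  rw [le_min_iff] at hp' hq'
  simp only [pentagon, mem_ofPred_eq, PiLp.add_apply, PiLp.smul_apply, smul_eq_mul, mem_Icc,
    le_min_iff]
  refine ⟨⟨by positivity, ?_⟩, by positivity, ?_, ?_⟩ <;>
    nlinarith [mul_le_mul_of_nonneg_left hp7 ha, mul_le_mul_of_nonneg_left hq7 hb,
      mul_le_mul_of_nonneg_left hp'.1 ha, mul_le_mul_of_nonneg_left hq'.1 hb,
      mul_le_mul_of_nonneg_left hp'.2 ha, mul_le_mul_of_nonneg_left hq'.2 hb]

theorem Convex.toLp_mem_of_lineMap {s : Set ℝ²} (hs : Convex ℝ s) {a b c d t x y : ℝ}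
    (hu : !₂[a, b] ∈ s) (hv : !₂[c, d] ∈ s) (ht : t ∈ Icc 0 1)
    (hx : a + t * (c - a) = x) (hy : b + t * (d - b) = y) : !₂[x, y] ∈ s := by
  convert hs.lineMap_mem hu hv ht using 1
  ext i
  fin_cases i <;>
    simp only [AffineMap.lineMap_apply_module, PiLp.add_apply, PiLp.smul_apply, smul_eq_mul,
      Fin.zero_eta, Fin.mk_one, Fin.isValue, Matrix.cons_val_zero, Matrix.cons_val_one,
      Matrix.cons_val_fin_one, ← hx, ← hy] <;> ring

theorem pentagon_subset_convexHull :
    pentagon ⊆ convexHull ℝ {!₂[0, 0], !₂[7, 0], !₂[7, 3], !₂[1, 3], !₂[0, 2]} := by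
  set V : Set ℝ² := {!₂[0, 0], !₂[7, 0], !₂[7, 3], !₂[1, 3], !₂[0, 2]}
  have hV := convex_convexHull ℝ V
  have vertex (v : ℝ²) (hv : v ∈ V) : v ∈ convexHull ℝ V := subset_convexHull ℝ V hv
  intro p hp
  obtain ⟨x, y, rfl⟩ : ∃ x y : ℝ, p = !₂[x, y] := ⟨p 0, p 1, by ext i; fin_cases i <;> rfl⟩
  obtain ⟨⟨hx0, hx7⟩, hy0, hy⟩ := hp
  obtain ⟨hy3, hy2⟩ := le_min_iff.1 hy
  simp only [Matrix.cons_val_zero, Matrix.cons_val_one] at hx0 hx7 hy0 hy3 hy2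
  -- `(x, y)` lies on the horizontal chord from the left boundary to the right edge `x = 7`
  have hright : !₂[7, y] ∈ convexHull ℝ V :=
    hV.toLp_mem_of_lineMap (vertex !₂[7, 0] (by simp [V])) (vertex !₂[7, 3] (by simp [V]))
      (t := y / 3) ⟨by positivity, by linarith⟩ (by ring) (by ring)
  obtain ⟨a, ha1, hax, hleft⟩ : ∃ a, a ≤ 1 ∧ a ≤ x ∧ !₂[a, y] ∈ convexHull ℝ V := by
    rcases le_total y 2 with h | h
    · exact ⟨0, zero_le_one, hx0, hV.toLp_mem_of_lineMap (vertex !₂[0, 0] (by simp [V]))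
        (vertex !₂[0, 2] (by simp [V])) (t := y / 2) ⟨by positivity, by linarith⟩
        (by ring) (by ring)⟩
    · exact ⟨y - 2, by linarith, by linarith, hV.toLp_mem_of_lineMap
        (vertex !₂[0, 2] (by simp [V])) (vertex !₂[1, 3] (by simp [V])) (t := y - 2)
        ⟨by linarith, by linarith⟩ (by ring) (by ring)⟩
  have h7a : 0 < 7 - a := by linarith
  exact hV.toLp_mem_of_lineMap hleft hright (t := (x - a) / (7 - a))
    ⟨div_nonneg (by linarith) h7a.le, (div_le_one h7a).2 (by linarith)⟩
    (by field_simp; ring) (by ring)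

theorem convexHull_eq_pentagon :
    convexHull ℝ {!₂[0, 0], !₂[7, 0], !₂[7, 3], !₂[1, 3], !₂[0, 2]} = pentagon := by
  refine (convexHull_min ?_ convex_pentagon).antisymm pentagon_subset_convexHull
  simp only [insert_subset_iff, singleton_subset_iff]
  norm_num [pentagon]

theorem integral_min_three_add_two : ∫ x in (0 : ℝ)..7, min 3 (x + 2) = 41 / 2 := by
  have hint (a b : ℝ) : IntervalIntegrable (fun x : ℝ => min 3 (x + 2)) volume a b :=
    (by fun_prop : Continuous fun x : ℝ => min 3 (x + 2)).intervalIntegrable a b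
  have h₁ : ∫ x in (0 : ℝ)..1, min 3 (x + 2) = ∫ x in (0 : ℝ)..1, (x + 2) :=
    intervalIntegral.integral_congr fun x hx => by
      rw [uIcc_of_le zero_le_one] at hx
      exact min_eq_right (by linarith [hx.2])
  have h₂ : ∫ x in (1 : ℝ)..7, min 3 (x + 2) = ∫ _ in (1 : ℝ)..7, (3 : ℝ) :=
    intervalIntegral.integral_congr fun x hx => by
      rw [uIcc_of_le (by norm_num)] at hx
      exact min_eq_left (by linarith [hx.1])
  rw [← intervalIntegral.integral_add_adjacent_intervals (hint 0 1) (hint 1 7), h₁, h₂]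
  norm_num

theorem volume_pentagon : volume pentagon = 41 / 2 := by
  have hI : MeasurableSet {q : ℝ × ℝ | q.2 ∈ Icc 0 (min 3 (q.1 + 2))} :=
    measurableSet_le measurable_const measurable_snd |>.inter
      (measurableSet_le measurable_snd (by fun_prop))
  refine (volume_setOf_mem_slice (I := fun x => Icc 0 (min 3 (x + 2))) measurableSet_Icc
    hI).trans ?_
  simp only [Real.volume_Icc, sub_zero]
  rw [← setLIntegral_congr Ioc_ae_eq_Icc, lintegral_Ioc_ofReal_eq_intervalIntegral
    (by norm_num) ((by fun_prop : Continuous fun x : ℝ => min 3 (x + 2)).intervalIntegrable 0 7)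
    (fun x hx => le_min (by norm_num) (by linarith [hx.1])), integral_min_three_add_two,
    ENNReal.ofReal_div_of_pos (by norm_num)]
  norm_num

def cornerTriangle : Set ℝ² := {p | p 0 ∈ Ico 0 1 ∧ p 1 ∈ Ioc 2 (p 0 + 2)}

theorem volume_cornerTriangle : volume cornerTriangle = 1 / 2 := by
  have hI : MeasurableSet {q : ℝ × ℝ | q.2 ∈ Ioc 2 (q.1 + 2)} :=
    measurableSet_lt measurable_const measurable_snd |>.inter
      (measurableSet_le measurable_snd (by fun_prop))
  refine (volume_setOf_mem_slice (I := fun x => Ioc 2 (x + 2)) measurableSet_Ico hI).trans ?_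
  simp only [Real.volume_Ioc, add_sub_cancel_right]
  rw [setLIntegral_congr (Ico_ae_eq_Icc.trans Ioc_ae_eq_Icc.symm),
    lintegral_Ioc_ofReal_eq_intervalIntegral (f := fun x => x) zero_le_one
      (continuous_id.intervalIntegrable 0 1) (fun x hx => hx.1.le),
    integral_id, ENNReal.ofReal_div_of_pos (by norm_num)]
  norm_num

def tetromino : Set ℝ² := rect 0 1 0 3 ∪ rect 1 2 0 1

def layout : Fin 5 → ℝ² ≃ᵢ ℝ² :=
  ![signedPermIsometry (Equiv.swap 0 1) ![1, 1] ![0, 0],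
    signedPermIsometry (Equiv.swap 0 1) ![1, 1] ![1, 1],
    signedPermIsometry (Equiv.swap 0 1) ![-1, -1] ![5, 3],
    signedPermIsometry (Equiv.swap 0 1) ![-1, 1] ![6, 0],
    signedPermIsometry (Equiv.refl _) ![-1, -1] ![7, 3]]

def piece : Fin 5 → Set ℝ² :=
  ![rect 0 3 0 1 ∪ rect 0 1 1 2,
    rect 1 4 1 2 ∪ rect 1 2 2 3,
    rect 2 5 2 3 ∪ rect 4 5 1 2,
    rect 3 6 0 1 ∪ rect 5 6 1 2,
    rect 6 7 0 3 ∪ rect 5 6 2 3]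

theorem layout_image_tetromino (i : Fin 5) : layout i '' tetromino = piece i := by
  ext p
  rw [← IsometryEquiv.preimage_symm]
  fin_cases i <;>
    simp only [layout, piece, tetromino, rect, preimage_union, mem_union, mem_preimage,
      mem_ofPred_eq, mem_Icc, signedPermIsometry_symm_apply, Fin.isValue,
      Fin.zero_eta, Fin.mk_one, Fin.reduceFinMk, Matrix.cons_val, Matrix.cons_val_zero,
      Matrix.cons_val_one, Matrix.cons_val_fin_one, Equiv.symm_swap, Equiv.swap_apply_left, Equiv.swap_apply_right,
      Equiv.refl_symm, Equiv.refl_apply, Units.val_neg, Units.val_one, Int.cast_neg,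
      Int.cast_one] <;>
    constructor <;> rintro (⟨⟨_, _⟩, _, _⟩ | ⟨⟨_, _⟩, _, _⟩) <;>
    first
      | exact Or.inl ⟨⟨by linarith, by linarith⟩, by linarith, by linarith⟩
      | exact Or.inr ⟨⟨by linarith, by linarith⟩, by linarith, by linarith⟩

theorem pairwise_disjoint_interior_piece :
    Pairwise fun i j => Disjoint (interior (piece i)) (interior (piece j)) := by
  intro i j hij
  fin_cases i <;> fin_cases j <;> simp only [ne_eq, not_true_eq_false] at hij <;>
    refine disjoint_interior_union_left (isClosed_rect ..)
      ((isClosed_rect ..).union (isClosed_rect ..)) ?_ ?_ <;>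
    refine (disjoint_interior_union_left (isClosed_rect ..) (isClosed_rect ..) ?_ ?_).symm <;>
    exact disjoint_interior_rect (by norm_num)

theorem rect_subset_pentagon {a b c d : ℝ} (ha : 0 ≤ a) (hb : b ≤ 7) (hc : 0 ≤ c) (hd : d ≤ 3)
    (hda : d ≤ a + 2) : rect a b c d ⊆ pentagon := by
  rintro p ⟨⟨_, _⟩, _, _⟩
  exact ⟨⟨by linarith, by linarith⟩, by linarith, le_min (by linarith) (by linarith)⟩

theorem piece_subset_pentagon (i : Fin 5) : piece i ⊆ pentagon := by
  fin_cases i <;>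
    exact union_subset (rect_subset_pentagon (by norm_num) (by norm_num) (by norm_num)
      (by norm_num) (by norm_num)) (rect_subset_pentagon (by norm_num) (by norm_num)
      (by norm_num) (by norm_num) (by norm_num))

theorem exists_mem_piece {p : ℝ²} (hp : p ∈ pentagon) (h : 1 ≤ p 0 ∨ p 1 ≤ 2) :
    ∃ i, p ∈ piece i := by
  obtain ⟨⟨hx0, hx7⟩, hy0, hy⟩ := hp
  obtain ⟨hy3, -⟩ := le_min_iff.1 hy
  rcases le_total 6 (p 0) with hx6 | hx6
  · exact ⟨4, Or.inl ⟨⟨hx6, hx7⟩, hy0, hy3⟩⟩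
  rcases le_total (p 1) 1 with hy1 | hy1
  · rcases le_total (p 0) 3 with hx3 | hx3
    · exact ⟨0, Or.inl ⟨⟨hx0, hx3⟩, hy0, hy1⟩⟩
    · exact ⟨3, Or.inl ⟨⟨hx3, hx6⟩, hy0, hy1⟩⟩
  rcases le_or_gt (p 1) 2 with hy2 | hy2
  · rcases le_total (p 0) 1 with hx1 | hx1
    · exact ⟨0, Or.inr ⟨⟨hx0, hx1⟩, hy1, hy2⟩⟩
    rcases le_total (p 0) 4 with hx4 | hx4
    · exact ⟨1, Or.inl ⟨⟨hx1, hx4⟩, hy1, hy2⟩⟩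
    rcases le_total (p 0) 5 with hx5 | hx5
    · exact ⟨2, Or.inr ⟨⟨hx4, hx5⟩, hy1, hy2⟩⟩
    · exact ⟨3, Or.inr ⟨⟨hx5, hx6⟩, hy1, hy2⟩⟩
  · have hx1 : 1 ≤ p 0 := h.resolve_right (by linarith)
    rcases le_total (p 0) 2 with hx2 | hx2
    · exact ⟨1, Or.inr ⟨⟨hx1, hx2⟩, hy2.le, hy3⟩⟩
    rcases le_total (p 0) 5 with hx5 | hx5
    · exact ⟨2, Or.inl ⟨⟨hx2, hx5⟩, hy2.le, hy3⟩⟩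
    · exact ⟨4, Or.inr ⟨⟨hx5, hx6⟩, hy2.le, hy3⟩⟩

theorem notMem_piece {p : ℝ²} (hx : p 0 < 1) (hy : 2 < p 1) (i : Fin 5) : p ∉ piece i := by
  fin_cases i <;> rintro (⟨⟨_, _⟩, _, _⟩ | ⟨⟨_, _⟩, _, _⟩) <;> linarith

theorem pentagon_diff_iUnion_piece : pentagon \ ⋃ i, piece i = cornerTriangle := by
  ext p
  simp only [mem_sdiff, mem_iUnion, not_exists]
  constructor
  · rintro ⟨hp, hnot⟩
    have hcorner : p 0 < 1 ∧ 2 < p 1 := by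
      by_contra! h
      obtain ⟨i, hi⟩ := exists_mem_piece hp ((le_or_gt 1 (p 0)).imp_right h)
      exact hnot i hi
    exact ⟨⟨hp.1.1, hcorner.1⟩, hcorner.2, (le_min_iff.1 hp.2.2).2⟩
  · rintro ⟨⟨hx0, hx1⟩, hy2, hy⟩
    exact ⟨⟨⟨hx0, by linarith⟩, by linarith, le_min (by linarith) hy⟩, notMem_piece hx1 hy2⟩

/-- Friedman's example: the convex pentagon obtained from a 3×7 rectangle by
chopping off a corner triangle of area 1/2 has area 41/2, and it admits a layout
of 5 mutually congruent L-tetrominoes (each of area 4) with pairwise disjoint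
interiors, leaving uncovered area exactly 1/2. -/
theorem friedman_pentagon_five_L_tetrominoes
    (P L : Set (EuclideanSpace ℝ (Fin 2)))
    (hP : P = convexHull ℝ {!₂[0, 0], !₂[7, 0], !₂[7, 3], !₂[1, 3], !₂[0, 2]})
    (hL : L = {p : EuclideanSpace ℝ (Fin 2) |
                 p 0 ∈ Set.Icc (0 : ℝ) 1 ∧ p 1 ∈ Set.Icc (0 : ℝ) 3} ∪
              {p : EuclideanSpace ℝ (Fin 2) |
                 p 0 ∈ Set.Icc (1 : ℝ) 2 ∧ p 1 ∈ Set.Icc (0 : ℝ) 1}) :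
    volume P = 41 / 2 ∧
    ∃ f : Fin 5 → (EuclideanSpace ℝ (Fin 2) ≃ᵢ EuclideanSpace ℝ (Fin 2)),
      (∀ i, f i '' L ⊆ P) ∧
      (∀ i j, i ≠ j → Disjoint (interior (f i '' L)) (interior (f j '' L))) ∧
      volume (P \ ⋃ i, f i '' L) = 1 / 2 := by
  have himage (i : Fin 5) : layout i '' L = piece i := hL ▸ layout_image_tetromino i
  rw [convexHull_eq_pentagon] at hP
  subst hP
  refine ⟨volume_pentagon, layout, fun i => ?_, fun i j hij => ?_, ?_⟩
  · exact himage i ▸ piece_subset_pentagon i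
  · simpa only [himage] using pairwise_disjoint_interior_piece hij
  · simp only [himage, pentagon_diff_iUnion_piece, volume_cornerTriangle]
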